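/- For every n ∈ ℕ and all u₁, v₁, u₂, v₂ ∈ ℂ with |u₁|² + |v₁|² = 1 and |u₂|² + |v₂|² = 1, one has Mⁿ(u₁u₂ − conj(v₁)v₂, v₁u₂ + conj(u₁)v₂) = Mⁿ(u₁,v₁) · Mⁿ(u₂,v₂); that is, the map sending the SU(2) element [[u, −conj(v)], [v, conj(u)]] to Mⁿ(u,v) is a group homomorphism (a representation of SU(2)). -/

import Mathlib

/-!
Up to the diagonal rescaling by `√(n choose k)`, column `k` of `Mⁿ(u,v)` lists the coefficients
of `(ū x - v̄ y)^k (v x + u y)^(n-k)` in the monomials `x^k' y^(n-k')`: it is the matrix, on binary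
forms of degree `n`, of the substitution `x ↦ ū x - v̄ y, y ↦ v x + u y` attached to
`[[u, -v̄], [v, ū]]`. Composing two such substitutions gives the one attached to the product
matrix, so these matrices multiply like the group elements, and conjugating by a diagonal matrix
preserves this.
-/

open Matrix Finset

/-- The polynomial parametrization `U^{(j)}` (with `j = n/2`, index `k = j - m`) of the
spin-`j` rotation matrix, as an `(n+1)×(n+1)` complex matrix depending on `u, v ∈ ℂ`. -/
noncomputable def Mrep (n : ℕ) (u v : ℂ) : Matrix (Fin (n + 1)) (Fin (n + 1)) ℂ :=
  Matrix.of fun k' k =>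
    (Real.sqrt ((n.choose (k : ℕ) : ℝ) / (n.choose (k' : ℕ) : ℝ)) : ℂ) *
      ∑ a ∈ Finset.Icc (max 0 ((k : ℕ) - (k' : ℕ))) (min (k : ℕ) (n - (k' : ℕ))),
        ((k : ℕ).choose a : ℂ) * ((n - (k : ℕ)).choose ((k' : ℕ) + a - (k : ℕ)) : ℂ) *
          (-1 : ℂ) ^ a * u ^ (n - (k' : ℕ) - a) * (starRingEnd ℂ u) ^ ((k : ℕ) - a) *
          v ^ ((k' : ℕ) + a - (k : ℕ)) * (starRingEnd ℂ v) ^ a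

open MvPolynomial ComplexConjugate

theorem add_pow_mul_add_pow_eq_sum {R : Type*} [CommSemiring R] (a b c d x y : R) (k m : ℕ) :
    (a * x + b * y) ^ k * (c * x + d * y) ^ m =
      ∑ k' ∈ range (k + m + 1),
        (∑ i ∈ Icc (k - k') (min k (k + m - k')),
          (k.choose i * m.choose (k' + i - k) : R) *
            a ^ (k - i) * b ^ i * c ^ (k' + i - k) * d ^ (k + m - k' - i)) *
          x ^ k' * y ^ (k + m - k') := by
  rw [add_comm (a * x), add_pow, add_pow, sum_mul_sum, ← sum_product',
    ← sum_fiberwise_of_maps_to (t := range (k + m + 1)) (g := fun p => k - p.1 + p.2)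
      (fun p hp => by simp only [mem_product, mem_range] at hp ⊢; omega)]
  refine sum_congr rfl fun k' hk' => ?_
  rw [sum_mul, sum_mul]
  refine sum_nbij' (fun p => p.1) (fun i => (i, k' + i - k)) ?_ ?_ ?_ ?_ ?_
  · intro p hp
    simp only [mem_filter, mem_product, mem_range, mem_Icc] at hp ⊢
    omega
  · intro i hi
    simp only [mem_filter, mem_product, mem_range, mem_Icc] at hi hk' ⊢
    omega
  · intro p hp
    simp only [mem_filter, mem_product, mem_range] at hp
    exact Prod.ext rfl (by dsimp only; omega)
  · exact fun _ _ => rfl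
  · intro p hp
    simp only [mem_filter, mem_product, mem_range] at hp
    obtain ⟨⟨hi, hj⟩, rfl⟩ := hp
    rw [show k - p.1 + p.2 + p.1 - k = p.2 by omega,
      show k + m - (k - p.1 + p.2) - p.1 = m - p.2 by omega,
      show k + m - (k - p.1 + p.2) = p.1 + (m - p.2) by omega]
    ring

theorem Matrix.diagonal_inv_mul_mul_diagonal_mul {K ι : Type*} [Field K] [Fintype ι]
    [DecidableEq ι] {d : ι → K} (hd : ∀ i, d i ≠ 0) (A B : Matrix ι ι K) :
    diagonal d⁻¹ * (A * B) * diagonal d =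
      (diagonal d⁻¹ * A * diagonal d) * (diagonal d⁻¹ * B * diagonal d) := by
  have hdd : diagonal d * diagonal d⁻¹ = 1 := by
    rw [diagonal_mul_diagonal, ← diagonal_one]
    exact congrArg diagonal (funext fun i => mul_inv_cancel₀ (hd i))
  simp only [Matrix.mul_assoc]
  rw [← Matrix.mul_assoc (diagonal d), hdd, Matrix.one_mul]

noncomputable def substSU2 (u v : ℂ) : MvPolynomial (Fin 2) ℂ →ₐ[ℂ] MvPolynomial (Fin 2) ℂ :=
  aeval ![C (conj u) * X 0 - C (conj v) * X 1, C v * X 0 + C u * X 1]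

theorem substSU2_C (u v c : ℂ) : substSU2 u v (C c) = C c := by
  rw [substSU2, aeval_C, algebraMap_eq]

theorem substSU2_X_zero (u v : ℂ) :
    substSU2 u v (X 0) = C (conj u) * X 0 - C (conj v) * X 1 :=
  aeval_X _ _

theorem substSU2_X_one (u v : ℂ) : substSU2 u v (X 1) = C v * X 0 + C u * X 1 :=
  aeval_X _ _

theorem substSU2_comp (u₁ v₁ u₂ v₂ : ℂ) :
    (substSU2 u₁ v₁).comp (substSU2 u₂ v₂) =
      substSU2 (u₁ * u₂ - conj v₁ * v₂) (v₁ * u₂ + conj u₁ * v₂) := by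
  refine MvPolynomial.algHom_ext fun i => ?_
  fin_cases i <;>
    simp only [AlgHom.comp_apply, Fin.zero_eta, Fin.mk_one, substSU2_X_zero, substSU2_X_one,
      map_add, map_sub, map_mul, substSU2_C, Complex.conj_conj] <;>
    ring

noncomputable def binaryMonomial (n j : ℕ) : MvPolynomial (Fin 2) ℂ := X 0 ^ j * X 1 ^ (n - j)

theorem sum_C_mul_binaryMonomial_injective (n : ℕ) :
    Function.Injective fun c : Fin (n + 1) → ℂ => ∑ j, C (c j) * binaryMonomial n j := by
  have hcoeff : ∀ (c : Fin (n + 1) → ℂ) (i : Fin (n + 1)),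
      coeff (Finsupp.single 0 (i : ℕ) + Finsupp.single 1 (n - i))
        (∑ j, C (c j) * binaryMonomial n j) = c i := by
    intro c i
    simp only [coeff_sum, coeff_C_mul, binaryMonomial, X_pow_eq_monomial, monomial_mul, mul_one,
      coeff_monomial]
    refine (sum_eq_single i (fun j _ hj => ?_) (by simp)).trans (by simp)
    rw [if_neg fun h => hj (Fin.ext (by simpa using DFunLike.congr_fun h 0)), mul_zero]
  intro c c' h
  funext i
  rw [← hcoeff c i, ← hcoeff c' i]
  exact congrArg _ h

noncomputable def substCoeff (n k' k : ℕ) (u v : ℂ) : ℂ :=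
  ∑ a ∈ Icc (k - k') (min k (n - k')),
    (k.choose a : ℂ) * ((n - k).choose (k' + a - k) : ℂ) * (-1 : ℂ) ^ a * u ^ (n - k' - a) *
      conj u ^ (k - a) * v ^ (k' + a - k) * conj v ^ a

noncomputable def substMatrix (n : ℕ) (u v : ℂ) : Matrix (Fin (n + 1)) (Fin (n + 1)) ℂ :=
  Matrix.of fun k' k => substCoeff n k' k u v

theorem substSU2_binaryMonomial (n : ℕ) (u v : ℂ) (k : Fin (n + 1)) :
    substSU2 u v (binaryMonomial n k) =
      ∑ k', C (substMatrix n u v k' k) * binaryMonomial n k' := by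
  have hexp := add_pow_mul_add_pow_eq_sum (C (conj u)) (C (-conj v)) (C v) (C u)
    (X 0 : MvPolynomial (Fin 2) ℂ) (X 1) k (n - k)
  rw [Nat.add_sub_cancel' k.is_le, map_neg, neg_mul, ← sub_eq_add_neg] at hexp
  simp only [binaryMonomial, map_mul, map_pow, substSU2_X_zero, substSU2_X_one, substMatrix,
    of_apply]
  rw [hexp, Fin.sum_univ_eq_sum_range
    (fun k' => C (substCoeff n k' k u v) * (X 0 ^ k' * X 1 ^ (n - k')))]
  refine sum_congr rfl fun k' _ => ?_
  simp only [substCoeff, map_sum, sum_mul]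
  refine sum_congr rfl fun a _ => ?_
  simp only [map_mul, map_pow, map_natCast, map_neg, map_one]
  ring

theorem substMatrix_mul (n : ℕ) (u₁ v₁ u₂ v₂ : ℂ) :
    substMatrix n (u₁ * u₂ - conj v₁ * v₂) (v₁ * u₂ + conj u₁ * v₂) =
      substMatrix n u₁ v₁ * substMatrix n u₂ v₂ := by
  ext k' k
  suffices (fun i => substMatrix n (u₁ * u₂ - conj v₁ * v₂) (v₁ * u₂ + conj u₁ * v₂) i k) =
      fun i => (substMatrix n u₁ v₁ * substMatrix n u₂ v₂) i k from congrFun this k'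
  apply sum_C_mul_binaryMonomial_injective n
  dsimp only
  rw [← substSU2_binaryMonomial, ← substSU2_comp, AlgHom.comp_apply, substSU2_binaryMonomial,
    map_sum]
  simp only [map_mul, substSU2_C, substSU2_binaryMonomial, mul_apply, map_sum, sum_mul, mul_sum]
  rw [sum_comm]
  refine sum_congr rfl fun j _ => sum_congr rfl fun i _ => ?_
  ring

theorem Mrep_eq_diagonal_conj (n : ℕ) (u v : ℂ) :
    Mrep n u v = diagonal (fun k : Fin (n + 1) => (√(n.choose k : ℝ) : ℂ))⁻¹ *
      substMatrix n u v * diagonal (fun k : Fin (n + 1) => (√(n.choose k : ℝ) : ℂ)) := by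
  ext k' k
  rw [mul_diagonal, diagonal_mul, Mrep, substMatrix, of_apply, of_apply, substCoeff, Nat.zero_max,
    Real.sqrt_div' _ (Nat.cast_nonneg _), Complex.ofReal_div, Pi.inv_apply]
  ring

theorem Mrep_mul (n : ℕ) (u₁ v₁ u₂ v₂ : ℂ) :
    Mrep n (u₁ * u₂ - starRingEnd ℂ v₁ * v₂) (v₁ * u₂ + starRingEnd ℂ u₁ * v₂) =
      Mrep n u₁ v₁ * Mrep n u₂ v₂ := by
  have hd : ∀ k : Fin (n + 1), (√(n.choose k : ℝ) : ℂ) ≠ 0 := fun k => by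
    exact_mod_cast (Real.sqrt_pos.2 (by exact_mod_cast Nat.choose_pos k.is_le)).ne'
  rw [Mrep_eq_diagonal_conj, Mrep_eq_diagonal_conj, Mrep_eq_diagonal_conj, substMatrix_mul,
    diagonal_inv_mul_mul_diagonal_mul hd]
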